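/- If X is a cosmic space (a regular space that is a continuous image of a separable metrizable space), then C_p(X) is Ascoli if and only if C_p(X) is κ-Fréchet–Urysohn. -/

import Mathlib

open Topology Filter TopologicalSpace

abbrev Cp (X : Type*) [TopologicalSpace X] : Type _ := {f : X → ℝ // Continuous f}

def IsAscoli (Y : Type*) [TopologicalSpace Y] : Prop :=
  ∀ K : Set C(Y, ℝ), IsCompact K → Continuous fun p : Y × K => (p.2 : C(Y, ℝ)) p.1

def KappaFrechetUrysohn (Z : Type*) [TopologicalSpace Z] : Prop :=
  ∀ U : Set Z, IsOpen U → ∀ z ∈ closure U,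
    ∃ s : ℕ → Z, (∀ n, s n ∈ U) ∧ Filter.Tendsto s Filter.atTop (nhds z)

/-- A cosmic space: a regular space which is a continuous image of a separable
metrizable space. -/
def IsCosmic (X : Type u) [TopologicalSpace X] : Prop :=
  RegularSpace X ∧ ∃ (M : Type u) (_ : TopologicalSpace M),
    MetrizableSpace M ∧ SeparableSpace M ∧
      ∃ f : M → X, Continuous f ∧ Function.Surjective f

open Set

universe u

lemma kfu_isAscoli {Y : Type*} [TopologicalSpace Y] (hY : KappaFrechetUrysohn Y) :
    IsAscoli Y := by
  intro K hK
  rw [continuous_iff_continuousAt]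
  by_contra hcont
  push_neg at hcont
  obtain ⟨⟨y₀, f₀⟩, hp⟩ := hcont
  set c : ℝ := (f₀ : C(Y, ℝ)) y₀ with hc
  have hp' : ∃ ε > 0, ∃ᶠ q in 𝓝 (y₀, f₀),
      ε ≤ dist ((q.2 : C(Y, ℝ)) q.1) c := by
    by_contra h
    push_neg at h
    apply hp
    rw [ContinuousAt, Metric.tendsto_nhds]
    intro ε hε
    have := h ε hε
    exact this.mono fun q hq => hq
  obtain ⟨ε, hε, hfreq⟩ := hp'
  set W : Set C(Y, ℝ) := {f | dist (f y₀) c < ε / 4} with hW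
  have hWopen : IsOpen W :=
    isOpen_lt (Continuous.dist (continuous_eval_const y₀) continuous_const)
      continuous_const
  have hf₀W : (f₀ : C(Y, ℝ)) ∈ W := by simp [hW, hc]; linarith
  set U : Set Y := ⋃ (f : C(Y, ℝ)) (_ : f ∈ K ∩ W), {y | ε / 2 < dist (f y) c} with hU
  have hUopen : IsOpen U := by
    refine isOpen_biUnion fun f _ => ?_
    exact isOpen_lt continuous_const ((map_continuous f).dist continuous_const)
  have hy₀U : y₀ ∈ closure U := by
    rw [mem_closure_iff]
    intro O hO hyO
    have hs : O ×ˢ (Subtype.val ⁻¹' W) ∈ 𝓝 (y₀, f₀) := by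
      rw [nhds_prod_eq]
      refine prod_mem_prod (hO.mem_nhds hyO) ?_
      rw [nhds_subtype_eq_comap]
      exact preimage_mem_comap (hWopen.mem_nhds hf₀W)
    obtain ⟨⟨y, f'⟩, h1, h2⟩ := (hfreq.and_eventually (eventually_of_mem hs fun q hq => hq)).exists
    refine ⟨y, h2.1, ?_⟩
    refine mem_biUnion (show (f' : C(Y, ℝ)) ∈ K ∩ W from ⟨f'.2, h2.2⟩) ?_
    simp only [mem_setOf_eq]
    exact lt_of_lt_of_le (by linarith) h1
  obtain ⟨s, hsU, hsy₀⟩ := hY U hUopen y₀ hy₀U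
  have hFex : ∀ n, ∃ f : C(Y, ℝ), f ∈ K ∩ W ∧ ε / 2 < dist (f (s n)) c := by
    intro n
    have := hsU n
    rw [hU, mem_iUnion₂] at this
    obtain ⟨f, hf1, hf2⟩ := this
    exact ⟨f, hf1, hf2⟩
  choose F hFK hFd using hFex
  set S : Set Y := insert y₀ (Set.range s) with hS
  have hScomp : IsCompact S := hsy₀.isCompact_insert_range
  haveI : CompactSpace ↥S := isCompact_iff_compactSpace.mp hScomp
  set ρ : C(Y, ℝ) → C(↥S, ℝ) := fun f => f.restrict S with hρ
  have hρcont : Continuous ρ := ContinuousMap.continuous_restrict S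
  have hKS : IsCompact (ρ '' K) := hK.image hρcont
  obtain ⟨a, _, σ, hσ, ha⟩ := hKS.tendsto_subseq (fun n => mem_image_of_mem ρ (hFK n).1)
  set z : ℕ → ↥S := fun k => ⟨s (σ k), by exact mem_insert_iff.mpr (Or.inr (mem_range_self _))⟩
    with hz
  have hztend : Tendsto z atTop (𝓝 (⟨y₀, mem_insert _ _⟩ : ↥S)) := by
    rw [tendsto_subtype_rng]
    exact hsy₀.comp hσ.tendsto_atTop
  have h1 : Tendsto (fun k => dist (((fun n => ρ (F n)) ∘ σ) k) a) atTop (𝓝 0) :=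
    tendsto_iff_dist_tendsto_zero.mp ha
  have h2 : Tendsto (fun k => a (z k)) atTop (𝓝 (a (⟨y₀, mem_insert _ _⟩ : ↥S))) :=
    ((map_continuous a).continuousAt.tendsto.comp hztend)
  have h1' : ∀ᶠ k in atTop, dist (ρ (F (σ k))) a < ε / 16 := by
    have := h1.eventually (eventually_lt_nhds (show (0:ℝ) < ε/16 by linarith))
    exact this
  have h2' : ∀ᶠ k in atTop,
      dist (a (z k)) (a (⟨y₀, mem_insert _ _⟩ : ↥S)) < ε / 16 :=
    h2.eventually (Metric.ball_mem_nhds (a (⟨y₀, mem_insert _ _⟩ : ↥S))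
        (show (0:ℝ) < ε/16 by linarith)) |>.mono
      (fun k hk => by simpa [Metric.mem_ball] using hk)
  obtain ⟨k, hk1, hk2⟩ := (h1'.and h2').exists
  have e1 : dist (ρ (F (σ k)) (z k)) (a (z k)) ≤ dist (ρ (F (σ k))) a :=
    ContinuousMap.dist_apply_le_dist _
  have e3 : dist (a (⟨y₀, mem_insert _ _⟩ : ↥S)) c ≤ ε / 16 + ε / 4 := by
    have t1 : dist (a (⟨y₀, mem_insert _ _⟩ : ↥S)) (ρ (F (σ k)) (⟨y₀, mem_insert _ _⟩ : ↥S)) ≤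
        dist (ρ (F (σ k))) a := by
      rw [dist_comm]; exact ContinuousMap.dist_apply_le_dist _
    have t2 : dist (ρ (F (σ k)) (⟨y₀, mem_insert _ _⟩ : ↥S)) c < ε / 4 := (hFK (σ k)).2
    calc dist (a (⟨y₀, mem_insert _ _⟩ : ↥S)) c
        ≤ dist (a (⟨y₀, mem_insert _ _⟩ : ↥S)) (ρ (F (σ k)) (⟨y₀, mem_insert _ _⟩ : ↥S)) +
          dist (ρ (F (σ k)) (⟨y₀, mem_insert _ _⟩ : ↥S)) c := dist_triangle _ _ _
      _ ≤ ε / 16 + ε / 4 := by linarith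
  have emain : dist (ρ (F (σ k)) (z k)) c ≤
      dist (ρ (F (σ k)) (z k)) (a (z k)) + dist (a (z k)) (a (⟨y₀, mem_insert _ _⟩ : ↥S)) +
        dist (a (⟨y₀, mem_insert _ _⟩ : ↥S)) c :=
    dist_triangle4 _ _ _ _
  have hfinal : ε / 2 < dist (ρ (F (σ k)) (z k)) c := hFd (σ k)
  linarith


section Helpers

variable {X : Type u} [TopologicalSpace X]

lemma Cp.continuous_eval (x : X) : Continuous fun f : Cp X => f.1 x :=
  (continuous_apply x).comp continuous_subtype_val

lemma Cp.isOpen_cylinder (G : Finset X) (c : Cp X) (δ : ℝ) :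
    IsOpen {f : Cp X | ∀ x ∈ G, |f.1 x - c.1 x| < δ} := by
  have : {f : Cp X | ∀ x ∈ G, |f.1 x - c.1 x| < δ} =
      ⋂ x ∈ G, {f : Cp X | |f.1 x - c.1 x| < δ} := by
    ext f; simp
  rw [this]
  exact isOpen_biInter_finset fun x _ =>
    isOpen_lt ((Cp.continuous_eval x).sub continuous_const).abs continuous_const

lemma Cp.exists_cylinder {g : Cp X} {s : Set (Cp X)} (hs : s ∈ 𝓝 g) :
    ∃ (G : Finset X) (δ : ℝ), 0 < δ ∧
      {f : Cp X | ∀ x ∈ G, |f.1 x - g.1 x| < δ} ⊆ s := by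
  rw [nhds_subtype_eq_comap, mem_comap] at hs
  obtain ⟨t, ht, hts⟩ := hs
  rw [mem_nhds_iff] at ht
  obtain ⟨O, hOt, hOopen, hgO⟩ := ht
  obtain ⟨I, u, hu, hIu⟩ := isOpen_pi_iff.mp hOopen g.1 hgO
  have hex : ∀ x : ↥I, ∃ δ : ℝ, 0 < δ ∧ Metric.ball (g.1 x.1) δ ⊆ u x.1 := by
    intro x
    have := (hu x.1 x.2).1.mem_nhds (hu x.1 x.2).2
    rw [Metric.mem_nhds_iff] at this
    exact this
  choose δf hδf hball using hex
  by_cases hI : I.Nonempty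
  · set δ := I.attach.inf' (by simpa using hI) δf with hδ
    refine ⟨I, δ, ?_, ?_⟩
    · exact (Finset.lt_inf'_iff _).mpr fun y _ => hδf y
    · intro f hf
      apply hts
      apply hOt
      apply hIu
      intro x hx
      apply hball ⟨x, hx⟩
      rw [Metric.mem_ball, Real.dist_eq]
      exact lt_of_lt_of_le (hf x hx) (Finset.inf'_le _ (Finset.mem_attach _ ⟨x, hx⟩))
  · refine ⟨I, 1, one_pos, ?_⟩
    intro f _
    apply hts; apply hOt; apply hIu
    intro x hx
    exact absurd ⟨x, hx⟩ hI

lemma Cp.tendsto_iff {q : ℕ → Cp X} {g : Cp X} :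
    Tendsto q atTop (𝓝 g) ↔
      ∀ x, Tendsto (fun n => (q n).1 x) atTop (𝓝 (g.1 x)) := by
  rw [tendsto_subtype_rng, tendsto_pi_nhds]

end Helpers

section Helpers2

variable {X : Type u} [TopologicalSpace X]

lemma exists_bump [T35Space X] (A : Finset X) (V : Set X) (hV : IsOpen V)
    (hAV : ↑A ⊆ V) :
    ∃ χ : X → ℝ, Continuous χ ∧ (∀ x, 0 ≤ χ x ∧ χ x ≤ 1) ∧ (∀ x ∈ A, χ x = 1) ∧
      (∀ x, x ∉ V → χ x = 0) := by
  classical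
  have key : ∀ a ∈ A, ∃ φ : X → ℝ, Continuous φ ∧ (∀ x, 0 ≤ φ x ∧ φ x ≤ 1) ∧ φ a = 1 ∧
      (∀ x ∈ A.erase a, φ x = 0) ∧ (∀ x, x ∉ V → φ x = 0) := by
    intro a ha
    set K : Set X := (↑(A.erase a) : Set X) ∪ Vᶜ with hK
    have hKclosed : IsClosed K := ((A.erase a).finite_toSet.isClosed).union hV.isClosed_compl
    have haK : a ∉ K := by
      simp only [hK, mem_union, Finset.coe_erase, not_or]
      constructor
      · intro h; exact h.2 rfl
      · simpa using hAV ha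
    obtain ⟨f, hfc, hf0, hf1⟩ := CompletelyRegularSpace.completely_regular a K hKclosed haK
    refine ⟨fun x => 1 - (f x : ℝ), continuous_const.sub (continuous_subtype_val.comp hfc),
      fun x => ⟨sub_nonneg.mpr (f x).2.2, by simpa using (f x).2.1⟩, ?_, ?_, ?_⟩
    · show (1:ℝ) - (f a : ℝ) = 1
      rw [hf0]; norm_num
    · intro x hx
      show (1:ℝ) - (f x : ℝ) = 0
      rw [hf1 (mem_union_left _ (by exact_mod_cast hx))]; norm_num
    · intro x hx
      show (1:ℝ) - (f x : ℝ) = 0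
      rw [hf1 (mem_union_right _ hx)]; norm_num
  choose φ hφc hφ01 hφ1 hφe hφV using key
  refine ⟨fun x => min 1 (∑ a ∈ A.attach, φ a.1 a.2 x), ?_, ?_, ?_, ?_⟩
  · exact continuous_const.min (continuous_finset_sum _ fun a _ => hφc a.1 a.2)
  · intro x
    constructor
    · exact le_min zero_le_one (Finset.sum_nonneg fun a _ => (hφ01 a.1 a.2 x).1)
    · exact min_le_left _ _
  · intro x hx
    have h1 := Finset.single_le_sum (f := fun a : {a // a ∈ A} => φ a.1 a.2 x)
      (fun a _ => (hφ01 a.1 a.2 x).1) (Finset.mem_attach A ⟨x, hx⟩)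
    have h1' : (1:ℝ) ≤ ∑ a ∈ A.attach, φ a.1 a.2 x := by
      simpa [hφ1 x hx] using h1
    show min (1:ℝ) (∑ a ∈ A.attach, φ a.1 a.2 x) = 1
    exact min_eq_left h1'
  · intro x hx
    have hz : ∀ a ∈ A.attach, φ a.1 a.2 x = 0 := fun a _ => hφV a.1 a.2 x hx
    show min (1:ℝ) (∑ a ∈ A.attach, φ a.1 a.2 x) = 0
    rw [Finset.sum_eq_zero hz]
    simp

lemma cosmic_network (hX : IsCosmic X) :
    ∃ (ι : Type u) (_ : Countable ι) (N : ι → Set X),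
      ∀ (x : X) (O : Set X), IsOpen O → x ∈ O → ∃ i, x ∈ N i ∧ N i ⊆ O := by
  obtain ⟨-, M, _, hmet, hsep, f, hf, hsurj⟩ := hX
  haveI := hmet; haveI := hsep
  letI : MetricSpace M := TopologicalSpace.metrizableSpaceMetric M
  haveI : SecondCountableTopology M := UniformSpace.secondCountable_of_separable M
  refine ⟨↥(countableBasis M), (countable_countableBasis M).to_subtype,
    fun B => f '' B.1, ?_⟩
  intro x O hO hx
  obtain ⟨m, rfl⟩ := hsurj x
  obtain ⟨B, hB, hmB, hBO⟩ := (isBasis_countableBasis M).exists_subset_of_mem_open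
    (show m ∈ f ⁻¹' O from hx) (hO.preimage hf)
  exact ⟨⟨B, hB⟩, mem_image_of_mem f hmB, by
    rintro - ⟨m', hm', rfl⟩; exact hBO hm'⟩

lemma cosmic_separable (hX : IsCosmic X) : ∃ D : Set X, D.Countable ∧ Dense D := by
  obtain ⟨-, M, _, hmet, hsep, f, hf, hsurj⟩ := hX
  haveI := hmet; haveI := hsep
  obtain ⟨D₀, hD₀c, hD₀d⟩ := TopologicalSpace.exists_countable_dense M
  exact ⟨f '' D₀, hD₀c.image f, hsurj.denseRange.dense_image hf hD₀d⟩

lemma compact_tendsto_subseq (hX : IsCosmic X) {Q : Set (Cp X)} (hQ : IsCompact Q)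
    {q : ℕ → Cp X} (hq : ∀ n, q n ∈ Q) :
    ∃ g ∈ Q, ∃ σ : ℕ → ℕ, StrictMono σ ∧ Tendsto (q ∘ σ) atTop (𝓝 g) := by
  obtain ⟨D, hDc, hDd⟩ := cosmic_separable hX
  haveI := hDc.to_subtype
  set ρ : Cp X → (↥D → ℝ) := fun f d => f.1 d.1 with hρ
  have hρc : Continuous ρ := continuous_pi fun d => Cp.continuous_eval d.1
  have hρinj : Function.Injective ρ := by
    intro f g hfg
    apply Subtype.ext
    apply Continuous.ext_on hDd f.2 g.2
    intro x hx
    exact congrFun hfg ⟨x, hx⟩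
  letI : MetricSpace (↥D → ℝ) := TopologicalSpace.metrizableSpaceMetric _
  have hcomp : IsCompact (ρ '' Q) := hQ.image hρc
  obtain ⟨a, haQ, σ, hσ, ha⟩ := hcomp.tendsto_subseq
    (x := fun n => ρ (q n)) (fun n => mem_image_of_mem ρ (hq n))
  obtain ⟨g, hgQ, rfl⟩ := haQ
  refine ⟨g, hgQ, σ, hσ, ?_⟩
  haveI : CompactSpace ↥Q := isCompact_iff_compactSpace.mp hQ
  have hemb : IsClosedEmbedding (fun p : ↥Q => ρ p.1) :=
    Continuous.isClosedEmbedding (hρc.comp continuous_subtype_val)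
      (fun p p' hpp => Subtype.ext (hρinj hpp))
  have : Tendsto (fun n => (⟨q (σ n), hq (σ n)⟩ : ↥Q)) atTop (𝓝 ⟨g, hgQ⟩) := by
    rw [hemb.isEmbedding.tendsto_nhds_iff]
    exact ha
  have := (continuous_subtype_val.continuousAt (x := (⟨g, hgQ⟩ : ↥Q))).tendsto.comp this
  exact this

end Helpers2

section Cover

variable {X : Type u} [TopologicalSpace X]

lemma countable_cylinder_cover (hX : IsCosmic X) {U : Set (Cp X)} (hU : IsOpen U) :
    ∃ (κ : Type u) (_ : Countable κ) (F : κ → Finset X) (cc : κ → Cp X) (ε : κ → ℝ),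
      (∀ j, 0 < ε j) ∧
      (∀ j, {f : Cp X | ∀ x ∈ F j, |f.1 x - (cc j).1 x| < ε j} ⊆ U) ∧
      (∀ f ∈ U, ∃ j, ∀ x ∈ F j, |f.1 x - (cc j).1 x| < ε j) := by
  classical
  obtain ⟨ι, hιc, N, hN⟩ := cosmic_network hX
  haveI := hιc
  have key : ∀ f : Cp X, f ∈ U → ∃ (G : Finset X) (δ : ℝ), 0 < δ ∧
      ({h : Cp X | ∀ x ∈ G, |h.1 x - f.1 x| < δ} ⊆ U) := fun f hf =>
    Cp.exists_cylinder (hU.mem_nhds hf)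
  choose G δ hδpos hδsub using key
  have key2 : ∀ (f : Cp X) (hf : f ∈ U) (x : ↥(G f hf)), ∃ p : ι × ℚ × ℚ,
      x.1 ∈ N p.1 ∧ (∀ y ∈ N p.1, f.1 y ∈ Set.Ioo (p.2.1 : ℝ) (p.2.2 : ℝ)) ∧
      ((p.2.2 : ℝ) - (p.2.1 : ℝ) < δ f hf) := by
    intro f hf x
    have hpos := hδpos f hf
    obtain ⟨q, hq1, hq2⟩ := exists_rat_btwn
      (show f.1 x.1 - δ f hf / 2 < f.1 x.1 by linarith)
    obtain ⟨r, hr1, hr2⟩ := exists_rat_btwn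
      (show f.1 x.1 < f.1 x.1 + δ f hf / 2 by linarith)
    obtain ⟨i, hxi, hiO⟩ := hN x.1 ((f.1) ⁻¹' Set.Ioo (q:ℝ) (r:ℝ))
      (isOpen_Ioo.preimage f.2) ⟨hq2, hr1⟩
    exact ⟨⟨i, q, r⟩, hxi, fun y hy => hiO hy, by
      simp only
      linarith⟩
  choose dat hdat1 hdat2 hdat3 using key2
  let sig : ∀ f : Cp X, f ∈ U → Finset (ι × ℚ × ℚ) := fun f hf =>
    (G f hf).attach.image (dat f hf)
  let κ := {v : Finset (ι × ℚ × ℚ) // ∃ (f : Cp X) (hf : f ∈ U), sig f hf = v}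
  haveI : Countable κ := Subtype.countable
  have hrep : ∀ v : κ, ∃ (f : Cp X) (hf : f ∈ U), sig f hf = v.1 := fun v => v.2
  choose rep hrepU hrepsig using hrep
  have claim : ∀ (f : Cp X) (hf : f ∈ U) (g : Cp X) (hg : g ∈ U), sig f hf = sig g hg →
      ∀ x ∈ G f hf, |g.1 x - f.1 x| < δ f hf := by
    intro f hf g hg hsig x hx
    have hmem : dat f hf ⟨x, hx⟩ ∈ sig g hg := by
      rw [← hsig]
      exact Finset.mem_image_of_mem _ (Finset.mem_attach _ _)
    obtain ⟨y, -, hy⟩ := Finset.mem_image.mp hmem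
    have hxN : x ∈ N (dat f hf ⟨x, hx⟩).1 := hdat1 f hf ⟨x, hx⟩
    have hfx : f.1 x ∈ Set.Ioo ((dat f hf ⟨x, hx⟩).2.1 : ℝ) ((dat f hf ⟨x, hx⟩).2.2 : ℝ) :=
      hdat2 f hf ⟨x, hx⟩ x hxN
    have hgx : g.1 x ∈ Set.Ioo ((dat f hf ⟨x, hx⟩).2.1 : ℝ) ((dat f hf ⟨x, hx⟩).2.2 : ℝ) := by
      have h2 := hdat2 g hg y
      rw [hy] at h2
      exact h2 x hxN
    have hlen := hdat3 f hf ⟨x, hx⟩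
    rw [abs_lt]
    obtain ⟨ha1, ha2⟩ := hfx
    obtain ⟨hb1, hb2⟩ := hgx
    constructor <;> linarith
  refine ⟨κ, inferInstance, fun v => G (rep v) (hrepU v), fun v => rep v,
    fun v => δ (rep v) (hrepU v), fun v => hδpos _ _, fun v => hδsub _ _, ?_⟩
  intro f hf
  refine ⟨⟨sig f hf, ⟨f, hf, rfl⟩⟩, ?_⟩
  intro x hx
  exact claim (rep _) (hrepU _) f hf (by rw [hrepsig]) x hx

end Cover

section Main

variable {X : Type u} [TopologicalSpace X] [T35Space X]

noncomputable def thr (k : ℕ) : ℝ := 1 / ((k : ℝ) + 1)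

lemma thr_pos (k : ℕ) : 0 < thr k := by
  unfold thr; positivity

lemma thr_anti {m k : ℕ} (h : m ≤ k) : thr k ≤ thr m := by
  unfold thr
  apply one_div_le_one_div_of_le
  · positivity
  · have : (m:ℝ) ≤ k := Nat.cast_le.mpr h
    linarith

lemma thr_tendsto : Tendsto thr atTop (𝓝 0) := by
  unfold thr
  exact tendsto_one_div_add_atTop_nhds_zero_nat

lemma min_one_le_helper {t c : ℝ} (h : min 1 t ≤ c) (hc : c < 1) : t ≤ c := by
  rcases le_total t 1 with ht | ht
  · rwa [min_eq_right ht] at h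
  · rw [min_eq_left ht] at h; linarith

lemma main_zero (hA : IsAscoli (Cp X)) (hX : IsCosmic X) {U : Set (Cp X)}
    (hU : IsOpen U) (hcl : (⟨fun _ => 0, continuous_const⟩ : Cp X) ∈ closure U) :
    ∃ g : ℕ → Cp X, (∀ n, g n ∈ U) ∧
      Tendsto g atTop (𝓝 (⟨fun _ => 0, continuous_const⟩ : Cp X)) := by
  classical
  set z₀ : Cp X := ⟨fun _ => 0, continuous_const⟩ with hz₀
  obtain ⟨κ, hκc, F, cc, ε, hε, hsub, hcov⟩ := countable_cylinder_cover hX hU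
  -- Step B : recursive choice of elements of U small on growing finite sets
  have step : ∀ (E : Finset X) (k : ℕ), ∃ p : Cp X × κ, p.1 ∈ U ∧
      (∀ x ∈ E, |p.1.1 x| < thr k) ∧
      (∀ x ∈ F p.2, |p.1.1 x - (cc p.2).1 x| < ε p.2) := by
    intro E k
    have hO : IsOpen {f : Cp X | ∀ x ∈ E, |f.1 x - z₀.1 x| < thr k} :=
      Cp.isOpen_cylinder E z₀ _
    have hz₀O : z₀ ∈ {f : Cp X | ∀ x ∈ E, |f.1 x - z₀.1 x| < thr k} := by
      intro x hx
      simpa using thr_pos k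
    obtain ⟨f, hfO, hfU⟩ := mem_closure_iff.mp hcl _ hO hz₀O
    obtain ⟨j, hj⟩ := hcov f hfU
    refine ⟨(f, j), hfU, ?_, hj⟩
    intro x hx
    simpa [hz₀] using hfO x hx
  let st : ℕ → (Cp X × κ) × Finset X := fun k => Nat.rec
    (⟨(step ∅ 0).choose, F (step ∅ 0).choose.2⟩)
    (fun k ih => ⟨(step ih.2 (k+1)).choose, ih.2 ∪ F ((step ih.2 (k+1)).choose.2)⟩) k
  let ff : ℕ → Cp X := fun k => (st k).1.1
  let jj : ℕ → κ := fun k => (st k).1.2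
  let E : ℕ → Finset X := fun k => (st k).2
  have hffU : ∀ k, ff k ∈ U := by
    intro k
    cases k with
    | zero => exact (step ∅ 0).choose_spec.1
    | succ k => exact (step (E k) (k+1)).choose_spec.1
  have hffcyl : ∀ k, ∀ x ∈ F (jj k), |(ff k).1 x - (cc (jj k)).1 x| < ε (jj k) := by
    intro k
    cases k with
    | zero => exact (step ∅ 0).choose_spec.2.2
    | succ k => exact (step (E k) (k+1)).choose_spec.2.2
  have hffsmall : ∀ k, ∀ x ∈ E k, |(ff (k+1)).1 x| < thr (k+1) := by
    intro k
    exact (step (E k) (k+1)).choose_spec.2.1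
  have hEstep : ∀ k, E (k+1) = E k ∪ F (jj (k+1)) := fun k => rfl
  have hE0 : E 0 = F (jj 0) := rfl
  have hFsubE : ∀ k, F (jj k) ⊆ E k := by
    intro k
    cases k with
    | zero => exact subset_of_eq hE0.symm
    | succ k => rw [hEstep k]; exact Finset.subset_union_right
  have hEmono : ∀ m k, m ≤ k → E m ⊆ E k := by
    intro m k hmk
    induction k with
    | zero => simpa [Nat.le_zero.mp hmk] using Finset.Subset.refl _
    | succ k ih =>
      rcases Nat.lt_or_ge m (k+1) with h | h
      · exact (ih (Nat.lt_succ_iff.mp h)).trans (by rw [hEstep k]; exact Finset.subset_union_left)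
      · have : m = k + 1 := le_antisymm hmk h
        subst this
        exact Finset.Subset.refl _
  let A : ℕ → Finset X := fun k => (F (jj k)).filter (fun x => thr k ≤ |(ff k).1 x|)
  have hAsubF : ∀ k, A k ⊆ F (jj k) := fun k => Finset.filter_subset _ _
  have hdisjF : ∀ m k, m < k → ∀ x ∈ A k, x ∉ F (jj m) := by
    intro m k hmk x hxA hxF
    obtain ⟨k', rfl⟩ : ∃ k', k = k' + 1 := ⟨k - 1, by omega⟩
    have hm : m ≤ k' := by omega
    have hxE : x ∈ E k' := hEmono m k' hm (hFsubE m hxF)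
    have hsmall := hffsmall k' x hxE
    have hbig : thr (k'+1) ≤ |(ff (k'+1)).1 x| := (Finset.mem_filter.mp hxA).2
    linarith
  have hAdisj : ∀ m k, m < k → ∀ x ∈ A k, x ∉ A m :=
    fun m k hmk x hxA hxm => hdisjF m k hmk x hxA (hAsubF m hxm)
  let ES : ℕ → Finset X := fun k => (Finset.range k).biUnion A
  have hAES : ∀ k, ∀ x ∈ A k, x ∉ ES k := by
    intro k x hxA hxES
    obtain ⟨m, hm, hxm⟩ := Finset.mem_biUnion.mp hxES
    exact hAdisj m k (Finset.mem_range.mp hm) x hxA hxm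
  have hψc : ∀ k, Continuous fun h : Cp X =>
      max 0 (1 - (∑ x ∈ A k, max 0 (1 - h.1 x)) -
        ((k:ℝ)+1) * ∑ x ∈ ES k, min 1 |h.1 x|) := by
    intro k
    refine continuous_const.max (Continuous.sub (continuous_const.sub ?_) ?_)
    · exact continuous_finset_sum _ fun x _ =>
        continuous_const.max (continuous_const.sub (Cp.continuous_eval x))
    · exact continuous_const.mul (continuous_finset_sum _ fun x _ =>
        continuous_const.min (Cp.continuous_eval x).abs)
  let ψ : ℕ → C(Cp X, ℝ) := fun k =>
    ⟨fun h => max 0 (1 - (∑ x ∈ A k, max 0 (1 - h.1 x)) -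
        ((k:ℝ)+1) * ∑ x ∈ ES k, min 1 |h.1 x|), hψc k⟩
  have hψ_nonneg : ∀ k h, 0 ≤ ψ k h := fun k h => le_max_left _ _
  -- C1 : the sequence ψ does not converge to 0 in C_k(C_p(X))
  have hC1 : ¬ Tendsto ψ atTop (𝓝 (0 : C(Cp X, ℝ))) := by
    intro htend
    have hKcomp : IsCompact (insert (0 : C(Cp X, ℝ)) (Set.range ψ)) :=
      htend.isCompact_insert_range
    have hcont := hA _ hKcomp
    set pt : (Cp X) × ↥(insert (0 : C(Cp X, ℝ)) (Set.range ψ)) :=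
      (z₀, ⟨0, mem_insert _ _⟩) with hpt
    have hca : ContinuousAt
        (fun p : (Cp X) × ↥(insert (0 : C(Cp X, ℝ)) (Set.range ψ)) =>
          (p.2 : C(Cp X, ℝ)) p.1) pt := hcont.continuousAt
    have hmem := hca (Metric.ball_mem_nhds _ one_half_pos)
    rw [mem_map, nhds_prod_eq, Filter.mem_prod_iff] at hmem
    obtain ⟨s, hs, t, ht, hst⟩ := hmem
    obtain ⟨G, δ, hδ, hGs⟩ := Cp.exists_cylinder hs
    rw [nhds_subtype_eq_comap, mem_comap] at ht
    obtain ⟨t', ht', ht's⟩ := ht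
    have hevt : ∀ᶠ k in atTop, ψ k ∈ t' := mem_map.mp (htend ht')
    have hdisjG : ∀ᶠ k in atTop, ∀ x ∈ G, x ∉ A k := by
      rw [eventually_all_finset]
      intro x hx
      by_cases hxA : ∃ k₀, x ∈ A k₀
      · obtain ⟨k₀, hk₀⟩ := hxA
        filter_upwards [eventually_gt_atTop k₀] with k hk hxk
        exact hAdisj k₀ k hk x hxk hk₀
      · push_neg at hxA
        filter_upwards with k
        exact hxA k
    obtain ⟨k, hkt', hkG⟩ := (hevt.and hdisjG).exists
    have hAV : ↑(A k) ⊆ ((↑(ES k ∪ G) : Set X))ᶜ := by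
      intro x hxA
      simp only [Finset.coe_union, mem_compl_iff, mem_union, Finset.mem_coe, not_or]
      exact ⟨fun h => hAES k x hxA h, fun h => hkG x h hxA⟩
    obtain ⟨χ, hχc, hχ01, hχ1, hχ0⟩ := exists_bump (A k) _
      ((ES k ∪ G).finite_toSet.isClosed.isOpen_compl) hAV
    set fb : Cp X := ⟨χ, hχc⟩ with hfb
    have hfbs : fb ∈ s := by
      apply hGs
      intro x hx
      have hx0 : χ x = 0 := by
        apply hχ0
        simp only [mem_compl_iff, Finset.coe_union, mem_union, Finset.mem_coe, not_not]
        exact Or.inr hx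
      simp only [hfb, hz₀]
      simpa [hx0] using hδ
    have hψkt : (⟨ψ k, Or.inr (mem_range_self k)⟩ :
        ↥(insert (0 : C(Cp X, ℝ)) (Set.range ψ))) ∈ t := ht's hkt'
    have hballmem := Set.mem_preimage.mp (hst (Set.mk_mem_prod hfbs hψkt))
    have hdd : dist (ψ k fb) ((0 : C(Cp X, ℝ)) z₀) < 1/2 := hballmem
    have hval : ψ k fb = 1 := by
      have h1 : ∑ x ∈ A k, max 0 (1 - fb.1 x) = 0 :=
        Finset.sum_eq_zero fun x hx => by
          simp [hfb, hχ1 x hx]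
      have h2 : ∑ x ∈ ES k, min 1 |fb.1 x| = 0 :=
        Finset.sum_eq_zero fun x hx => by
          have hx0 : χ x = 0 := by
            apply hχ0
            simp only [mem_compl_iff, Finset.coe_union, mem_union, Finset.mem_coe, not_not]
            exact Or.inl hx
          simp [hfb, hx0]
      show max 0 (1 - (∑ x ∈ A k, max 0 (1 - fb.1 x)) -
        ((k:ℝ)+1) * ∑ x ∈ ES k, min 1 |fb.1 x|) = 1
      rw [h1, h2]
      norm_num
    rw [hval] at hdd
    simp only [ContinuousMap.zero_apply, Real.dist_eq] at hdd
    norm_num at hdd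
  -- extract a compact set witnessing failure of uniform-on-compacta smallness
  rw [ContinuousMap.tendsto_nhds_compactOpen] at hC1
  push_neg at hC1
  obtain ⟨Q, hQcomp, V, hVopen, hmaps, hnotev⟩ := hC1
  have hwit : ∀ k, ¬ Set.MapsTo (ψ k) Q V → ∃ h ∈ Q, ψ k h ∉ V := by
    intro k hk
    rw [Set.MapsTo] at hk
    push_neg at hk
    exact hk
  have h0V : (0 : ℝ) ∈ V := by
    obtain ⟨k0, hk0⟩ := hnotev.exists
    obtain ⟨h0, hh0Q, -⟩ := hwit k0 hk0
    simpa using hmaps hh0Q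
  obtain ⟨δV, hδV, hballV⟩ := Metric.isOpen_iff.mp hVopen 0 h0V
  have hfreq2 : ∃ᶠ k in atTop, ∃ h ∈ Q, δV ≤ ψ k h := by
    refine hnotev.mono fun k hk => ?_
    obtain ⟨h, hhQ, hhV⟩ := hwit k hk
    refine ⟨h, hhQ, ?_⟩
    by_contra hlt
    push_neg at hlt
    refine hhV (hballV ?_)
    rw [Metric.mem_ball, Real.dist_eq, sub_zero, abs_of_nonneg (hψ_nonneg k h)]
    exact hlt
  obtain ⟨e, he, hP⟩ := Filter.extraction_of_frequently_atTop hfreq2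
  choose q hqQ hqge using hP
  have hSA_nonneg : ∀ n, (0:ℝ) ≤ ∑ x ∈ A (e n), max 0 (1 - (q n).1 x) :=
    fun n => Finset.sum_nonneg fun x _ => le_max_left _ _
  have hSE_nonneg : ∀ n, (0:ℝ) ≤ ∑ x ∈ ES (e n), min 1 |(q n).1 x| :=
    fun n => Finset.sum_nonneg fun x _ => le_min zero_le_one (abs_nonneg _)
  have hT : ∀ n, δV ≤ 1 - (∑ x ∈ A (e n), max 0 (1 - (q n).1 x)) -
      ((e n : ℝ)+1) * ∑ x ∈ ES (e n), min 1 |(q n).1 x| := by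
    intro n
    have hg := hqge n
    have hval : ψ (e n) (q n) = max 0 (1 - (∑ x ∈ A (e n), max 0 (1 - (q n).1 x)) -
      ((e n : ℝ)+1) * ∑ x ∈ ES (e n), min 1 |(q n).1 x|) := rfl
    rw [hval] at hg
    rcases le_max_iff.mp hg with h | h
    · linarith
    · exact h
  have hq1 : ∀ n, ∀ x ∈ A (e n), δV ≤ (q n).1 x := by
    intro n x hx
    have hterm : max 0 (1 - (q n).1 x) ≤ ∑ x ∈ A (e n), max 0 (1 - (q n).1 x) :=
      Finset.single_le_sum (f := fun y => max 0 (1 - (q n).1 y))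
        (fun y _ => le_max_left _ _) hx
    have h2 : (0:ℝ) ≤ ((e n : ℝ)+1) * ∑ x ∈ ES (e n), min 1 |(q n).1 x| := by
      have := hSE_nonneg n
      positivity
    have h3 := hT n
    have h4 : 1 - (q n).1 x ≤ max 0 (1 - (q n).1 x) := le_max_right _ _
    linarith
  have hq2 : ∀ n, ∀ y ∈ ES (e n), min 1 |(q n).1 y| ≤ thr (e n) := by
    intro n y hy
    have hterm : min 1 |(q n).1 y| ≤ ∑ x ∈ ES (e n), min 1 |(q n).1 x| :=
      Finset.single_le_sum (f := fun x => min 1 |(q n).1 x|)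
        (fun x _ => le_min zero_le_one (abs_nonneg _)) hy
    have h3 := hT n
    have h5 : ((e n : ℝ)+1) * ∑ x ∈ ES (e n), min 1 |(q n).1 x| ≤ 1 := by
      linarith [hSA_nonneg n, hδV]
    have hpos : (0:ℝ) < (e n : ℝ) + 1 := by positivity
    have hSEle : ∑ x ∈ ES (e n), min 1 |(q n).1 x| ≤ 1 / ((e n : ℝ)+1) := by
      rw [le_div_iff₀ hpos, mul_comm]
      exact h5
    calc min 1 |(q n).1 y| ≤ ∑ x ∈ ES (e n), min 1 |(q n).1 x| := hterm
      _ ≤ thr (e n) := hSEle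
  obtain ⟨g, hgQ, σ, hσ, hconv⟩ := compact_tendsto_subseq hX hQcomp hqQ
  have hptw : ∀ x, Tendsto (fun n => (q (σ n)).1 x) atTop (𝓝 (g.1 x)) :=
    fun x => Cp.tendsto_iff.mp hconv x
  set m : ℕ → ℕ := fun n => e (σ n) with hm
  have hm_strict : StrictMono m := he.comp hσ
  have hm_ge : ∀ n, n ≤ m n := fun n => (hσ.le_apply).trans (he.le_apply)
  have hg0 : ∀ j, ∀ x ∈ A j, g.1 x = 0 := by
    intro j x hx
    have hbound : ∀ᶠ n in atTop, |(q (σ n)).1 x| ≤ thr n := by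
      filter_upwards [eventually_ge_atTop (j+1), eventually_ge_atTop 1] with n hn hn1
      have hje : j < m n := lt_of_lt_of_le (Nat.lt_of_succ_le hn) (hm_ge n)
      have hxES : x ∈ ES (m n) := Finset.mem_biUnion.mpr ⟨j, Finset.mem_range.mpr hje, hx⟩
      have h1 := hq2 (σ n) x hxES
      have h2 : thr (m n) ≤ thr n := thr_anti (hm_ge n)
      have h3 : thr n < 1 := by
        unfold thr
        rw [div_lt_one (by positivity)]
        have : (1:ℝ) ≤ (n:ℝ) := by exact_mod_cast hn1
        linarith
      exact min_one_le_helper (h1.trans h2) h3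
    have htends0 : Tendsto (fun n => (q (σ n)).1 x) atTop (𝓝 0) := by
      apply tendsto_of_tendsto_of_tendsto_of_le_of_le' (g := fun n => -(thr n)) (h := thr)
      · simpa using thr_tendsto.neg
      · exact thr_tendsto
      · exact hbound.mono fun n hn => (abs_le.mp hn).1
      · exact hbound.mono fun n hn => (abs_le.mp hn).2
    exact tendsto_nhds_unique (hptw x) htends0
  set Uo : ℕ → Set X := fun n => {x | δV/2 < (q (σ n)).1 x - g.1 x} with hUodef
  have hUoopen : ∀ n, IsOpen (Uo n) := fun n =>
    isOpen_lt continuous_const ((q (σ n)).2.sub g.2)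
  have hAUo : ∀ n, ↑(A (m n)) ⊆ Uo n := by
    intro n x hx
    have h1 := hq1 (σ n) x hx
    have h2 := hg0 (m n) x hx
    simp only [hUodef, mem_setOf_eq]
    rw [h2]
    linarith
  have hUofin : ∀ y : X, ∀ᶠ n in atTop, y ∉ Uo n := by
    intro y
    have hh : Tendsto (fun n => (q (σ n)).1 y - g.1 y) atTop (𝓝 0) := by
      simpa using (hptw y).sub (tendsto_const_nhds (x := g.1 y))
    filter_upwards [hh.eventually (eventually_lt_nhds (half_pos hδV))] with n hn
    simp only [hUodef, mem_setOf_eq, not_lt]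
    exact hn.le
  have hbump : ∀ n, ∃ χ : X → ℝ, Continuous χ ∧ (∀ x, 0 ≤ χ x ∧ χ x ≤ 1) ∧
      (∀ x ∈ A (m n), χ x = 1) ∧ (∀ x, x ∉ Uo n → χ x = 0) :=
    fun n => exists_bump _ _ (hUoopen n) (hAUo n)
  choose χ hχc hχ01 hχ1 hχ0 using hbump
  have hgseqcont : ∀ n, Continuous fun x =>
      χ n x * (ff (m n)).1 x +
        (1 - χ n x) * max (-(thr (m n))) (min (thr (m n)) ((ff (m n)).1 x)) := by
    intro n
    exact ((hχc n).mul (ff (m n)).2).add ((continuous_const.sub (hχc n)).mul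
      (continuous_const.max (continuous_const.min (ff (m n)).2)))
  set gs : ℕ → Cp X := fun n => ⟨_, hgseqcont n⟩ with hgsdef
  have hgsval : ∀ n, ∀ x ∈ F (jj (m n)), (gs n).1 x = (ff (m n)).1 x := by
    intro n x hx
    by_cases hxA : x ∈ A (m n)
    · have h1 := hχ1 n x hxA
      show χ n x * (ff (m n)).1 x +
        (1 - χ n x) * max (-(thr (m n))) (min (thr (m n)) ((ff (m n)).1 x)) = (ff (m n)).1 x
      rw [h1]
      ring
    · have hlt : |(ff (m n)).1 x| < thr (m n) := by
        by_contra hge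
        push_neg at hge
        exact hxA (Finset.mem_filter.mpr ⟨hx, hge⟩)
      obtain ⟨hl, hr⟩ := abs_lt.mp hlt
      show χ n x * (ff (m n)).1 x +
        (1 - χ n x) * max (-(thr (m n))) (min (thr (m n)) ((ff (m n)).1 x)) = (ff (m n)).1 x
      rw [min_eq_right hr.le, max_eq_right hl.le]
      ring
  have hgsU : ∀ n, gs n ∈ U := by
    intro n
    apply hsub (jj (m n))
    intro x hx
    rw [hgsval n x hx]
    exact hffcyl (m n) x hx
  refine ⟨gs, hgsU, ?_⟩
  rw [Cp.tendsto_iff]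
  intro x
  have hzx : z₀.1 x = 0 := rfl
  rw [hzx]
  have hev : ∀ᶠ n in atTop, -(thr (m n)) ≤ (gs n).1 x ∧ (gs n).1 x ≤ thr (m n) := by
    filter_upwards [hUofin x] with n hn
    have hx0 : χ n x = 0 := hχ0 n x hn
    show -(thr (m n)) ≤ χ n x * (ff (m n)).1 x +
        (1 - χ n x) * max (-(thr (m n))) (min (thr (m n)) ((ff (m n)).1 x)) ∧
      χ n x * (ff (m n)).1 x +
        (1 - χ n x) * max (-(thr (m n))) (min (thr (m n)) ((ff (m n)).1 x)) ≤ thr (m n)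
    rw [hx0]
    simp only [zero_mul, sub_zero, one_mul, zero_add]
    refine ⟨le_max_left _ _, max_le ?_ (min_le_left _ _)⟩
    linarith [thr_pos (m n)]
  have hthm : Tendsto (fun n => thr (m n)) atTop (𝓝 0) :=
    thr_tendsto.comp hm_strict.tendsto_atTop
  apply tendsto_of_tendsto_of_tendsto_of_le_of_le'
    (g := fun n => -(thr (m n))) (h := fun n => thr (m n))
  · simpa using hthm.neg
  · exact hthm
  · exact hev.mono fun n hn => hn.1
  · exact hev.mono fun n hn => hn.2

end Main


section Final

variable {X : Type u} [TopologicalSpace X] [T35Space X]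

noncomputable def shiftCp (z : Cp X) : Cp X ≃ₜ Cp X where
  toFun f := ⟨f.1 + z.1, f.2.add z.2⟩
  invFun f := ⟨f.1 - z.1, f.2.sub z.2⟩
  left_inv f := Subtype.ext (by funext x; simp)
  right_inv f := Subtype.ext (by funext x; simp)
  continuous_toFun := Continuous.subtype_mk
    (continuous_pi fun x => (Cp.continuous_eval x).add continuous_const) _
  continuous_invFun := Continuous.subtype_mk
    (continuous_pi fun x => (Cp.continuous_eval x).sub continuous_const) _

lemma ascoli_to_kfu (hA : IsAscoli (Cp X)) (hX : IsCosmic X) :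
    KappaFrechetUrysohn (Cp X) := by
  intro U hU z hz
  set T := shiftCp (X := X) z with hT
  set U' : Set (Cp X) := T ⁻¹' U with hU'def
  have hU' : IsOpen U' := hU.preimage T.continuous
  have h0 : T (⟨fun _ => 0, continuous_const⟩ : Cp X) = z := Subtype.ext (by funext x; simp [hT, shiftCp])
  have hcl : (⟨fun _ => 0, continuous_const⟩ : Cp X) ∈ closure U' := by
    rw [hU'def, ← Homeomorph.preimage_closure]
    exact Set.mem_preimage.mpr (h0 ▸ hz)
  obtain ⟨g, hgU, hgt⟩ := main_zero hA hX hU' hcl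
  refine ⟨fun n => T (g n), fun n => hgU n, ?_⟩
  have := (T.continuous.continuousAt (x := (⟨fun _ => 0, continuous_const⟩ : Cp X))).tendsto.comp hgt
  rwa [h0] at this

end Final

theorem stmt4 {X : Type u} [TopologicalSpace X] [T35Space X]
    (hX : IsCosmic X) : IsAscoli (Cp X) ↔ KappaFrechetUrysohn (Cp X) := by
  exact ⟨fun hA => ascoli_to_kfu hA hX, fun h => kfu_isAscoli h⟩
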